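/- (Corollary: vertex case.) Assume each a_{j,r,n} belongs to ℂ{z}, that Λ_m = {(m,0)} with ord_t(a_{m,0}) = 0 (so the principal part of P(∂_t,∂_z) is a_{m,0,0}(z)·∂_t^m), and the non-resonance condition a_{m,0,0}(0) ≠ 0 (the constant term of a_{m,0,0} is nonzero). Then P(∂_t,∂_z)∂_t^{−m} is a bijective ℂ-linear map of ℂ[[t,z]] onto itself whose restriction to 𝒪[[t]] is a bijection of 𝒪[[t]] onto itself. -/

import Mathlib

open PowerSeries

set_option synthInstance.maxHeartbeats 1000000
set_option maxHeartbeats 1000000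

/-- Formal differentiation `∂_z` on `ℂ[[z]]` as a `ℂ`-linear map. -/
noncomputable def dz : PowerSeries ℂ →ₗ[ℂ] PowerSeries ℂ where
  toFun u := PowerSeries.mk fun n => ((n : ℂ) + 1) * PowerSeries.coeff (R := ℂ) (n + 1) u
  map_add' u v := by
    ext n
    simp [mul_add]
  map_smul' c u := by
    ext n
    simp
    ring

/-- The order of vanishing at `0` of a formal power series in `z`. -/
noncomputable def ordz (g : PowerSeries ℂ) : ℕ := sInf {k : ℕ | PowerSeries.coeff (R := ℂ) k g ≠ 0}

/-- `ℂ[[t,z]]`, identified with formal power series in `t` with coefficients in `ℂ[[z]]`. -/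
abbrev PS2 : Type := PowerSeries (PowerSeries ℂ)

lemma coeff2_smul (c : ℂ) (u : PS2) (n : ℕ) :
    PowerSeries.coeff (R := PowerSeries ℂ) n (c • u) =
      c • PowerSeries.coeff (R := PowerSeries ℂ) n u := rfl

/-- The order in `t` of an element of `ℂ[[t,z]]`. -/
noncomputable def ordT (g : PS2) : ℕ :=
  sInf {n : ℕ | PowerSeries.coeff (R := PowerSeries ℂ) n g ≠ 0}

/-- Formal differentiation `∂_t` on `ℂ[[t,z]]`. -/
noncomputable def dt : PS2 →ₗ[ℂ] PS2 where
  toFun u := PowerSeries.mk fun n =>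
    ((n : ℂ) + 1) • PowerSeries.coeff (R := PowerSeries ℂ) (n + 1) u
  map_add' u v := by
    ext n
    simp [smul_add]
  map_smul' c u := by
    ext n
    simp [coeff2_smul, smul_smul, mul_comm]

/-- Formal differentiation `∂_z` on `ℂ[[t,z]]`, acting on each coefficient `u_n ∈ ℂ[[z]]`. -/
noncomputable def dzc : PS2 →ₗ[ℂ] PS2 where
  toFun u := PowerSeries.mk fun n => dz (PowerSeries.coeff (R := PowerSeries ℂ) n u)
  map_add' u v := by
    ext n
    simp
  map_smul' c u := by
    ext n
    simp [coeff2_smul]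

/-- The integration operator `∂_t^{−m}` on `ℂ[[t,z]]`, sending `Σ u_n t^n` to
`Σ (n!/(n+m)!)·u_n t^{n+m}`. -/
noncomputable def dtInv (m : ℕ) : PS2 →ₗ[ℂ] PS2 where
  toFun u := PowerSeries.mk fun n =>
    if m ≤ n then
      ((((n - m).factorial : ℂ)) / (n.factorial : ℂ)) • PowerSeries.coeff (R := PowerSeries ℂ) (n - m) u
    else 0
  map_add' u v := by
    ext n
    simp only [PowerSeries.coeff_mk, map_add]
    split <;> simp [smul_add]
  map_smul' c u := by
    ext n
    simp only [PowerSeries.coeff_mk, coeff2_smul, RingHom.id_apply]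
    split <;> simp [coeff2_smul, smul_smul, mul_comm]

/-- The operator `P(∂_t,∂_z)∂_t^{−m}` on `ℂ[[t,z]]`, where
`P(∂_t,∂_z) u = Σ_{(j,r)∈Λ} a_{jr}·∂_t^j ∂_z^r u`. -/
noncomputable def POp (Λ : Finset (ℕ × ℕ)) (a : ℕ × ℕ → PS2) (m : ℕ) : PS2 →ₗ[ℂ] PS2 :=
  (∑ p ∈ Λ, (LinearMap.mulLeft ℂ (a p)).comp ((dt ^ p.1).comp (dzc ^ p.2))).comp (dtInv m)

/-- The coefficient `b_{n,r} = Σ_{j : (j,r)∈Λ_m} n(n−1)⋯(n−(j−m)+1)·a_{j,r,j−m} ∈ ℂ[[z]]`,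
where `M` is the integer `m = max_{(j,r)∈Λ}(j − ord_t(a_{jr}))`. -/
noncomputable def bcoef (Λ : Finset (ℕ × ℕ)) (a : ℕ × ℕ → PS2) (M : ℤ) (n r : ℕ) :
    PowerSeries ℂ :=
  ∑ p ∈ Λ.filter (fun p => p.2 = r ∧ (p.1 : ℤ) - (ordT (a p) : ℤ) = M),
    (n.descFactorial (p.1 - M.toNat) : ℂ) •
      PowerSeries.coeff (R := PowerSeries ℂ) (p.1 - M.toNat) (a p)

/-- The operator `P̃_m(n,∂_z) v = Σ_r b_{n,r}·∂_z^r v` on `ℂ[[z]]`. -/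
noncomputable def Ptil (Λ : Finset (ℕ × ℕ)) (a : ℕ × ℕ → PS2) (M : ℤ) (n : ℕ) :
    PowerSeries ℂ →ₗ[ℂ] PowerSeries ℂ :=
  ∑ r ∈ Λ.image Prod.snd, (LinearMap.mulLeft ℂ (bcoef Λ a M n r)).comp (dz ^ r)

/-- The quantity `W(n,k) = W_{m,0}(n,k,0)`: the sum over `(j,r) ∈ Λ_m` with
`ord_z(a_{j,r,j−m}) = r` of `c_{j,r}·n(n−1)⋯(n−(j−m)+1)·k(k−1)⋯(k−r+1)`, where `c_{j,r}` is
the coefficient of `z^r` in `a_{j,r,j−m}`. -/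
noncomputable def Wnk (Λ : Finset (ℕ × ℕ)) (a : ℕ × ℕ → PS2) (M : ℤ) (n k : ℕ) : ℂ :=
  ∑ p ∈ Λ.filter (fun p => (p.1 : ℤ) - (ordT (a p) : ℤ) = M ∧
      ordz (PowerSeries.coeff (R := PowerSeries ℂ) (p.1 - M.toNat) (a p)) = p.2),
    PowerSeries.coeff (R := ℂ) p.2 (PowerSeries.coeff (R := PowerSeries ℂ) (p.1 - M.toNat) (a p))
      * (n.descFactorial (p.1 - M.toNat) : ℂ) * (k.descFactorial p.2 : ℂ)

/-- The set `ℂ[[z]]_s` of Gevrey series of order `s`: series `Σ v_k z^k` with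
`|v_k| ≤ C·A^k·Γ(1+sk)` for some `C, A > 0`. -/
noncomputable def GevreyS (s : ℝ) : Set (PowerSeries ℂ) :=
  {u | ∃ C A : ℝ, 0 < C ∧ 0 < A ∧
    ∀ n : ℕ, ‖PowerSeries.coeff (R := ℂ) n u‖ ≤ C * A ^ n * Real.Gamma (1 + s * n)}

/-- `ℂ{z}`: power series with positive radius of convergence, i.e. with geometrically
bounded coefficients. -/
noncomputable def Cz : Set (PowerSeries ℂ) :=
  {u | ∃ C A : ℝ, 0 < C ∧ 0 < A ∧ ∀ n : ℕ, ‖PowerSeries.coeff (R := ℂ) n u‖ ≤ C * A ^ n}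

/-- `G_s[[t]]`: elements of `ℂ[[t,z]]` all of whose `t`-coefficients lie in `ℂ[[z]]_s`. -/
noncomputable def Gst (s : ℝ) : Set PS2 :=
  {u | ∀ n : ℕ, PowerSeries.coeff (R := PowerSeries ℂ) n u ∈ GevreyS s}

/-- `𝒪[[t]]`: elements of `ℂ[[t,z]]` all of whose `t`-coefficients lie in `ℂ{z}`. -/
noncomputable def Ot : Set PS2 :=
  {u | ∀ n : ℕ, PowerSeries.coeff (R := PowerSeries ℂ) n u ∈ Cz}

/-!
Write `L = P(∂_t,∂_z)∂_t^{-m}`. Off the vertex every term `a_{jr} ∂_t^j ∂_z^r ∂_t^{-m}` has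
`j < m + ord_t(a_{jr})`, so it strictly raises the order in `t`, while the vertex term is
multiplication by `a_{m,0}`. Hence `L` is lower triangular in the powers of `t` with constant
diagonal `a_{m,0,0}(z)`, a unit of `ℂ[[z]]` whose inverse is again convergent. The equation
`L u = f` is then solved coefficient by coefficient, `u_n = a_{m,0,0}⁻¹ (f_n - (L u_{<n})_n)`,
and since `ℂ{z}` is a ring stable under `∂_z`, convergent data give convergent solutions.
-/

open Finset

lemma add_mem_Cz {u v : PowerSeries ℂ} (hu : u ∈ Cz) (hv : v ∈ Cz) : u + v ∈ Cz := by
  obtain ⟨C₁, A₁, hC₁, hA₁, h₁⟩ := hu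
  obtain ⟨C₂, A₂, hC₂, hA₂, h₂⟩ := hv
  refine ⟨C₁ + C₂, max A₁ A₂, by positivity, lt_max_of_lt_left hA₁, fun n => ?_⟩
  calc ‖coeff n (u + v)‖ ≤ ‖coeff n u‖ + ‖coeff n v‖ := by rw [map_add]; exact norm_add_le _ _
    _ ≤ C₁ * max A₁ A₂ ^ n + C₂ * max A₁ A₂ ^ n := by
      gcongr
      · exact (h₁ n).trans (by gcongr; exact le_max_left _ _)
      · exact (h₂ n).trans (by gcongr; exact le_max_right _ _)
    _ = (C₁ + C₂) * max A₁ A₂ ^ n := by ring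

lemma mul_mem_Cz {u v : PowerSeries ℂ} (hu : u ∈ Cz) (hv : v ∈ Cz) : u * v ∈ Cz := by
  obtain ⟨C₁, A₁, hC₁, hA₁, h₁⟩ := hu
  obtain ⟨C₂, A₂, hC₂, hA₂, h₂⟩ := hv
  set A := max A₁ A₂
  have hA : 0 < A := lt_max_of_lt_left hA₁
  refine ⟨C₁ * C₂, 2 * A, by positivity, by positivity, fun n => ?_⟩
  have hterm : ∀ p ∈ antidiagonal n, ‖coeff p.1 u * coeff p.2 v‖ ≤ C₁ * C₂ * A ^ n := by
    intro p hp
    rw [norm_mul, ← mem_antidiagonal.mp hp, pow_add]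
    calc ‖coeff p.1 u‖ * ‖coeff p.2 v‖ ≤ (C₁ * A₁ ^ p.1) * (C₂ * A₂ ^ p.2) := by
          gcongr
          exacts [h₁ _, h₂ _]
      _ ≤ (C₁ * A ^ p.1) * (C₂ * A ^ p.2) := by
          gcongr
          exacts [le_max_left _ _, le_max_right _ _]
      _ = C₁ * C₂ * (A ^ p.1 * A ^ p.2) := by ring
  calc ‖coeff n (u * v)‖ ≤ ∑ p ∈ antidiagonal n, ‖coeff p.1 u * coeff p.2 v‖ := by
        rw [coeff_mul]; exact norm_sum_le _ _
    _ ≤ (n + 1) * (C₁ * C₂ * A ^ n) := by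
        simpa [Nat.card_antidiagonal] using sum_le_sum hterm
    _ ≤ 2 ^ n * (C₁ * C₂ * A ^ n) := by
        gcongr
        exact_mod_cast Nat.lt_two_pow_self
    _ = C₁ * C₂ * (2 * A) ^ n := by ring

def convergentSeries : Subalgebra ℂ (PowerSeries ℂ) where
  carrier := Cz
  mul_mem' := mul_mem_Cz
  add_mem' := add_mem_Cz
  algebraMap_mem' c := by
    refine ⟨‖c‖ + 1, 1, by positivity, one_pos, fun n => ?_⟩
    rw [Algebra.algebraMap_eq_smul_one, map_smul, coeff_one]
    split_ifs <;> simp [add_nonneg]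

lemma dz_mem_Cz {u : PowerSeries ℂ} (hu : u ∈ Cz) : dz u ∈ Cz := by
  obtain ⟨C, A, hC, hA, h⟩ := hu
  refine ⟨C * A, 2 * A, by positivity, by positivity, fun n => ?_⟩
  have hcoeff : coeff n (dz u) = ((n + 1 : ℕ) : ℂ) * coeff (n + 1) u := by simp [dz]
  rw [hcoeff, norm_mul, Complex.norm_natCast]
  calc ((n + 1 : ℕ) : ℝ) * ‖coeff (n + 1) u‖ ≤ 2 ^ n * (C * A ^ (n + 1)) := by
        gcongr
        · exact_mod_cast Nat.lt_two_pow_self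
        · exact h _
    _ = C * A * (2 * A) ^ n := by ring

lemma dz_pow_mem_Cz {r : ℕ} {u : PowerSeries ℂ} (hu : u ∈ Cz) : (dz ^ r) u ∈ Cz := by
  induction r with
  | zero => exact hu
  | succ r ih =>
    rw [pow_succ', Module.End.mul_apply]
    exact dz_mem_Cz ih

lemma norm_coeff_succ_le_of_mul_eq_one {v w : PowerSeries ℂ} (h : v * w = 1) (k : ℕ) :
    ‖coeff 0 v‖ * ‖coeff (k + 1) w‖ ≤
      ∑ i ∈ range (k + 1), ‖coeff (i + 1) v‖ * ‖coeff (k - i) w‖ := by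
  have hk : coeff (k + 1) (v * w) = 0 := by simp [h, coeff_one]
  rw [coeff_mul, Nat.sum_antidiagonal_eq_sum_range_succ_mk, sum_range_succ'] at hk
  simp only [Nat.sub_zero, Nat.reduceSubDiff] at hk
  rw [← norm_mul, eq_neg_of_add_eq_zero_right hk, norm_neg]
  refine (norm_sum_le _ _).trans_eq (sum_congr rfl fun i _ => ?_)
  rw [norm_mul]

lemma mem_Cz_of_mul_eq_one {v w : PowerSeries ℂ} (hv : v ∈ Cz) (h : v * w = 1) : w ∈ Cz := by
  obtain ⟨C, A, hC, hA, hb⟩ := hv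
  have hv₀ : coeff 0 v ≠ 0 := by
    rw [coeff_zero_eq_constantCoeff_apply]
    exact left_ne_zero_of_mul_eq_one (by simpa using congrArg (coeff 0) h)
  set c := ‖coeff 0 v‖
  have hc : 0 < c := norm_pos_iff.mpr hv₀
  set D := ‖coeff 0 w‖ + 1
  -- the ratio `q = A / B = c / (c + C)` makes `C * q / (1 - q) = c`
  obtain ⟨B, hB_def⟩ : ∃ B, B = A * (c + C) / c := ⟨_, rfl⟩
  have hB : 0 < B := by rw [hB_def]; positivity
  have hq : A / B = c / (c + C) := by rw [hB_def]; field_simp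
  have hq₁ : A / B < 1 := by rw [hq, div_lt_one (by positivity)]; linarith
  refine ⟨D, B, by positivity, hB, fun n => ?_⟩
  induction n using Nat.strong_induction_on with | _ n ih =>
  rcases n with _ | k
  · simp [D]
  refine le_of_mul_le_mul_left ?_ hc
  calc c * ‖coeff (k + 1) w‖
      ≤ ∑ i ∈ range (k + 1), C * A ^ (i + 1) * (D * B ^ (k - i)) :=
        (norm_coeff_succ_le_of_mul_eq_one h k).trans <| sum_le_sum fun i hi =>
          mul_le_mul (hb _) (ih _ (by omega)) (norm_nonneg _) (by positivity)
    _ = C * D * B ^ (k + 1) * (A / B) * ∑ i ∈ range (k + 1), (A / B) ^ i := by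
        rw [mul_sum]
        refine sum_congr rfl fun i hi => ?_
        have hik : B ^ (k + 1) = B ^ (i + 1) * B ^ (k - i) := by
          rw [← pow_add]; congr 1; have := mem_range.mp hi; omega
        rw [hik, div_pow]
        field_simp
        ring
    _ ≤ C * D * B ^ (k + 1) * (A / B) * (1 - A / B)⁻¹ := by
        gcongr
        have := geom_sum_Ico_le_of_lt_one (m := 0) (n := k + 1) (by positivity) hq₁
        rwa [← range_eq_Ico, pow_zero, one_div] at this
    _ = c * (D * B ^ (k + 1)) := by
        rw [hq]
        field_simp [hC.ne']
        ring

lemma inv_mem_Cz {v : PowerSeries ℂ} (hv : v ∈ Cz) : v⁻¹ ∈ Cz := by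
  by_cases hv₀ : constantCoeff v = 0
  · rw [PowerSeries.inv_eq_zero.mpr hv₀]
    exact convergentSeries.zero_mem
  · exact mem_Cz_of_mul_eq_one hv (PowerSeries.mul_inv_cancel v hv₀)

namespace PowerSeries

variable {R : Type*} [CommRing R] {F : Type*} [FunLike F R⟦X⟧ R⟦X⟧]

lemma coeff_mul_eq_zero_of_lt_add {b w : R⟦X⟧} {p q n : ℕ} (hb : ∀ i < p, coeff i b = 0)
    (hw : ∀ k < q, coeff k w = 0) (hn : n < p + q) : coeff n (b * w) = 0 :=
  X_pow_dvd_iff.mp (pow_add (X : R⟦X⟧) p q ▸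
    mul_dvd_mul (X_pow_dvd_iff.mpr hb) (X_pow_dvd_iff.mpr hw)) n hn

lemma coeff_mul_of_coeff_lt_eq_zero (b : R⟦X⟧) {u : R⟦X⟧} {n : ℕ}
    (hu : ∀ k < n, coeff k u = 0) : coeff n (b * u) = coeff 0 b * coeff n u := by
  obtain ⟨u, rfl⟩ := X_pow_dvd_iff.mpr hu
  simp [mul_left_comm b, coeff_X_pow_mul']

lemma coeff_mul_mem {S : Subring R} {b w : R⟦X⟧} (hb : ∀ n, coeff n b ∈ S)
    (hw : ∀ n, coeff n w ∈ S) (n : ℕ) : coeff n (b * w) ∈ S := by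
  rw [coeff_mul]
  exact S.sum_mem fun p _ => S.mul_mem (hb _) (hw _)

/-- `L` is lower triangular in the powers of `X`, with every diagonal entry equal to `c`. -/
def IsTriangularWithDiagonal (L : F) (c : R) : Prop :=
  ∀ u n, (∀ k < n, coeff k u = 0) → coeff n (L u) = c * coeff n u

/-- The coefficients of the solution of `L u = f` when `L` is triangular with diagonal `d⁻¹`. -/
noncomputable def solveCoeff (L : F) (d : R) (f : R⟦X⟧) (n : ℕ) : R :=
  d * (coeff n f - coeff n (L (mk fun k => if _ : k < n then solveCoeff L d f k else 0)))
termination_by n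

noncomputable def solve (L : F) (d : R) (f : R⟦X⟧) : R⟦X⟧ := mk (solveCoeff L d f)

lemma coeff_solve_mem {L : F} {d : R} {S : Subring R} (hd : d ∈ S)
    (hLS : Set.MapsTo L {u | ∀ n, coeff n u ∈ S} {u | ∀ n, coeff n u ∈ S}) {f : R⟦X⟧}
    (hf : ∀ n, coeff n f ∈ S) (n : ℕ) : coeff n (solve L d f) ∈ S := by
  induction n using Nat.strong_induction_on with | _ n ih =>
  rw [solve, coeff_mk, solveCoeff]
  refine S.mul_mem hd (S.sub_mem (hf n) (hLS (fun k => ?_) n))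
  rw [coeff_mk]
  split_ifs with hk
  · simpa only [solve, coeff_mk] using ih k hk
  · exact S.zero_mem

variable [AddMonoidHomClass F R⟦X⟧ R⟦X⟧]

namespace IsTriangularWithDiagonal

variable {L : F} {c : R}

lemma coeff_map_sub (hL : IsTriangularWithDiagonal L c) {u v : R⟦X⟧} {n : ℕ}
    (huv : ∀ k < n, coeff k u = coeff k v) :
    coeff n (L u) - coeff n (L v) = c * (coeff n u - coeff n v) := by
  simpa only [map_sub] using hL (u - v) n fun k hk => by rw [map_sub, huv k hk, sub_self]

lemma injective (hL : IsTriangularWithDiagonal L c) (hc : IsUnit c) : Function.Injective L := by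
  intro u v huv
  ext n
  induction n using Nat.strong_induction_on with | _ n ih =>
  have hn := hL.coeff_map_sub ih
  rwa [huv, sub_self, eq_comm, hc.mul_right_eq_zero, sub_eq_zero] at hn

lemma map_solve (hL : IsTriangularWithDiagonal L c) {d : R} (hcd : c * d = 1) (f : R⟦X⟧) :
    L (solve L d f) = f := by
  ext n
  set v : R⟦X⟧ := mk fun k => if _ : k < n then solveCoeff L d f k else 0
  have hn := hL.coeff_map_sub (u := solve L d f) (v := v) (n := n) fun k hk => by
    simp [solve, v, hk]
  have hvn : coeff n v = 0 := by simp [v]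
  have hun : coeff n (solve L d f) = d * (coeff n f - coeff n (L v)) := by
    rw [solve, coeff_mk, solveCoeff]
  rw [hvn, sub_zero, hun, ← mul_assoc, hcd, one_mul] at hn
  exact sub_left_injective hn

lemma bijective (hL : IsTriangularWithDiagonal L c) (hc : IsUnit c) : Function.Bijective L :=
  have ⟨d, hcd⟩ := hc.exists_right_inv
  ⟨hL.injective hc, fun f => ⟨solve L d f, hL.map_solve hcd f⟩⟩

lemma bijOn (hL : IsTriangularWithDiagonal L c) {d : R} (hcd : c * d = 1) {S : Subring R}
    (hd : d ∈ S) (hLS : Set.MapsTo L {u | ∀ n, coeff n u ∈ S} {u | ∀ n, coeff n u ∈ S}) :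
    Set.BijOn L {u | ∀ n, coeff n u ∈ S} {u | ∀ n, coeff n u ∈ S} :=
  ⟨hLS, (hL.injective (IsUnit.of_mul_eq_one d hcd)).injOn,
    fun f hf => ⟨solve L d f, coeff_solve_mem hd hLS hf, hL.map_solve hcd f⟩⟩

end IsTriangularWithDiagonal

end PowerSeries

lemma coeff_dt (u : PS2) (n : ℕ) : coeff n (dt u) = ((n : ℂ) + 1) • coeff (n + 1) u := by
  simp [dt]

lemma coeff_dt_pow (j : ℕ) (u : PS2) (n : ℕ) :
    coeff n ((dt ^ j) u) = ((n + j).descFactorial j : ℂ) • coeff (n + j) u := by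
  induction j generalizing n with
  | zero => simp
  | succ j ih =>
    rw [pow_succ', Module.End.mul_apply, coeff_dt, ih, smul_smul, Nat.descFactorial_succ,
      show n + 1 + j = n + (j + 1) by omega, show n + (j + 1) - j = n + 1 by omega]
    push_cast
    ring_nf

lemma coeff_dzc_pow (r : ℕ) (u : PS2) (n : ℕ) : coeff n ((dzc ^ r) u) = (dz ^ r) (coeff n u) := by
  induction r generalizing u with
  | zero => simp
  | succ r ih =>
    rw [pow_succ, Module.End.mul_apply, ih, pow_succ, Module.End.mul_apply]
    simp [dzc]

lemma coeff_dtInv (m : ℕ) (u : PS2) (n : ℕ) :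
    coeff n (dtInv m u) =
      if m ≤ n then (((n - m).factorial : ℂ) / (n.factorial : ℂ)) • coeff (n - m) u else 0 := by
  simp [dtInv]

lemma dt_pow_dtInv (m : ℕ) (u : PS2) : (dt ^ m) (dtInv m u) = u := by
  ext n : 1
  rw [coeff_dt_pow, coeff_dtInv, if_pos (Nat.le_add_left m n), Nat.add_sub_cancel, smul_smul]
  have hfac : n.factorial * (n + m).descFactorial m = (n + m).factorial := by
    simpa using Nat.factorial_mul_descFactorial (Nat.le_add_left m n)
  have hdesc : ((n + m).descFactorial m : ℂ) ≠ 0 := by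
    exact_mod_cast (Nat.descFactorial_pos.mpr (Nat.le_add_left m n)).ne'
  have hfact : (n.factorial : ℂ) ≠ 0 := Nat.cast_ne_zero.mpr n.factorial_ne_zero
  rw [← hfac, Nat.cast_mul, show ((n + m).descFactorial m : ℂ) * (n.factorial / (n.factorial *
    (n + m).descFactorial m)) = 1 by field_simp, one_smul]

lemma coeff_of_lt_ordT {g : PS2} {n : ℕ} (h : n < ordT g) : coeff n g = 0 := by
  by_contra hne
  exact (Nat.sInf_le hne).not_gt h

lemma POp_apply (Λ : Finset (ℕ × ℕ)) (a : ℕ × ℕ → PS2) (m : ℕ) (u : PS2) :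
    POp Λ a m u = ∑ p ∈ Λ, a p * (dt ^ p.1) ((dzc ^ p.2) (dtInv m u)) := by
  simp [POp]

lemma coeff_dt_pow_dzc_pow_dtInv_eq_zero {j r m n k : ℕ} {u : PS2}
    (hu : ∀ k < n, coeff k u = 0) (hk : k + j < n + m) :
    coeff k ((dt ^ j) ((dzc ^ r) (dtInv m u))) = 0 := by
  rw [coeff_dt_pow, coeff_dzc_pow, coeff_dtInv]
  split_ifs
  · rw [hu _ (by omega)]
    simp
  · simp

lemma POp_isTriangularWithDiagonal {Λ : Finset (ℕ × ℕ)} {a : ℕ × ℕ → PS2} {m : ℕ}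
    (hmem : (m, 0) ∈ Λ) (hlow : ∀ p ∈ Λ, p ≠ (m, 0) → p.1 < m + ordT (a p)) :
    IsTriangularWithDiagonal (POp Λ a m) (coeff 0 (a (m, 0))) := by
  intro u n hu
  rw [POp_apply, map_sum, sum_eq_single_of_mem _ hmem fun p hp hne => ?_]
  · rw [pow_zero, Module.End.one_apply, dt_pow_dtInv]
    exact coeff_mul_of_coeff_lt_eq_zero _ hu
  · exact coeff_mul_eq_zero_of_lt_add (p := ordT (a p)) (q := n + m - p.1)
      (fun i hi => coeff_of_lt_ordT hi)
      (fun k hk => coeff_dt_pow_dzc_pow_dtInv_eq_zero hu (by omega))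
      (by have := hlow p hp hne; omega)

lemma POp_mapsTo_Ot {Λ : Finset (ℕ × ℕ)} {a : ℕ × ℕ → PS2}
    (hconv : ∀ p ∈ Λ, ∀ n, coeff n (a p) ∈ Cz) (m : ℕ) : Set.MapsTo (POp Λ a m) Ot Ot := by
  intro u hu n
  rw [POp_apply, map_sum]
  refine convergentSeries.sum_mem fun p hp => coeff_mul_mem (S := convergentSeries.toSubring)
    (hconv p hp) (fun k => ?_) n
  rw [coeff_dt_pow, coeff_dzc_pow, coeff_dtInv]
  refine convergentSeries.smul_mem ?_ _
  split_ifs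
  · exact dz_pow_mem_Cz (convergentSeries.smul_mem (hu _) _)
  · rw [map_zero]
    exact convergentSeries.zero_mem

theorem statement15_general (Λ : Finset (ℕ × ℕ)) (hΛ : Λ.Nonempty) (a : ℕ × ℕ → PS2)
    (hconv : ∀ p ∈ Λ, ∀ n : ℕ, PowerSeries.coeff (R := PowerSeries ℂ) n (a p) ∈ Cz)
    (M : ℤ) (hM : M = Λ.sup' hΛ (fun p => (p.1 : ℤ) - (ordT (a p) : ℤ)))
    (hvertex : Λ.filter (fun p => (p.1 : ℤ) - (ordT (a p) : ℤ) = M) = {(M.toNat, 0)})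
    (hres : PowerSeries.coeff (R := ℂ) 0
      (PowerSeries.coeff (R := PowerSeries ℂ) 0 (a (M.toNat, 0))) ≠ 0) :
    Function.Bijective (POp Λ a M.toNat) ∧
      Set.BijOn (POp Λ a M.toNat) Ot Ot := by
  have hmem : (M.toNat, 0) ∈ Λ := (mem_filter.mp (hvertex ▸ mem_singleton_self _)).1
  have hlow : ∀ p ∈ Λ, p ≠ (M.toNat, 0) → p.1 < M.toNat + ordT (a p) := by
    intro p hp hne
    have hle : (p.1 : ℤ) - ordT (a p) ≤ M := hM ▸ le_sup' (fun p => (p.1 : ℤ) - ordT (a p)) hp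
    have hne_M : (p.1 : ℤ) - ordT (a p) ≠ M := fun h =>
      hne (mem_singleton.mp (hvertex ▸ mem_filter.mpr ⟨hp, h⟩))
    have := Int.self_le_toNat M
    omega
  have hL := POp_isTriangularWithDiagonal (a := a) hmem hlow
  set c := coeff 0 (a (M.toNat, 0))
  have hc : c * c⁻¹ = 1 :=
    PowerSeries.mul_inv_cancel c (by rwa [← coeff_zero_eq_constantCoeff_apply])
  exact ⟨hL.bijective (IsUnit.of_mul_eq_one _ hc),
    hL.bijOn hc (S := convergentSeries.toSubring) (inv_mem_Cz (hconv _ hmem 0))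
      (POp_mapsTo_Ot hconv _)⟩

/-- Corollary (vertex case): if each `a_{j,r,n} ∈ ℂ{z}`, `Λ_m = {(m,0)}` with
`ord_t(a_{m,0}) = 0` (so the principal part of `P(∂_t,∂_z)` is `a_{m,0,0}(z)·∂_t^m`), and
the non-resonance condition `a_{m,0,0}(0) ≠ 0` holds, then `P(∂_t,∂_z)∂_t^{−m}` is a
bijective `ℂ`-linear map of `ℂ[[t,z]]` onto itself restricting to a bijection of `𝒪[[t]]`
onto itself. -/
theorem statement15 (Λ : Finset (ℕ × ℕ)) (hΛ : Λ.Nonempty) (a : ℕ × ℕ → PS2)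
    (ha : ∀ p ∈ Λ, a p ≠ 0)
    (hconv : ∀ p ∈ Λ, ∀ n : ℕ, PowerSeries.coeff (R := PowerSeries ℂ) n (a p) ∈ Cz)
    (M : ℤ) (hM : M = Λ.sup' hΛ (fun p => (p.1 : ℤ) - (ordT (a p) : ℤ))) (hM0 : 0 ≤ M)
    (hvertex : Λ.filter (fun p => (p.1 : ℤ) - (ordT (a p) : ℤ) = M) = {(M.toNat, 0)})
    (hord : ordT (a (M.toNat, 0)) = 0)
    (hres : PowerSeries.coeff (R := ℂ) 0
      (PowerSeries.coeff (R := PowerSeries ℂ) 0 (a (M.toNat, 0))) ≠ 0) :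
    Function.Bijective (POp Λ a M.toNat) ∧
      Set.BijOn (POp Λ a M.toNat) Ot Ot :=
  statement15_general Λ hΛ a hconv M hM hvertex hres
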